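/- For all natural numbers i, j, k, m satisfying one of the two-minus-sign resonance relations ω_i + ω_j = ω_k + ω_m, ω_i + ω_k = ω_j + ω_m, or ω_i + ω_m = ω_j + ω_k, one has C_{ijkm} = ω_{min{i,j,k,m}} = min{i, j, k, m} + 1. -/

import Mathlib

open MeasureTheory

/-- Chebyshev polynomials of the second kind, as real-valued functions. -/
noncomputable def chebU : ℕ → ℝ → ℝ
  | 0, _ => 1
  | 1, y => 2 * y
  | n + 2, y => 2 * y * chebU (n + 1) y - chebU n y

/-- Fourier coefficients of the cubic conformal wave equation on the Einstein cylinder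
in spherical symmetry. -/
noncomputable def Ccoef (i j k m : ℕ) : ℝ :=
  (2 / Real.pi) *
    ∫ y in (-1:ℝ)..1, chebU i y * chebU j y * chebU k y * chebU m y * Real.sqrt (1 - y ^ 2)

/-!
Under `y = cos θ` the identity `U_n(cos θ) sin θ = sin((n+1)θ)` turns the weight `√(1 - y²) dy`
into `sin² θ dθ`, so the `U_n` are orthogonal on `[-1, 1]` with `‖U_n‖² = π / 2`. Linearizing
`U_i U_j = ∑_{p ≤ min(i,j)} U_{i+j-2p}` and `U_k U_m` likewise, `C_{ijkm}` counts the pairs `(p, q)`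
with `i + j - 2p = k + m - 2q`. When `i + j = k + m` these are the diagonal pairs
`p = q ≤ min(i, j, k, m)`; the other two resonances reduce to this one by the symmetry of `C`.
-/

open Real Polynomial Polynomial.Chebyshev Finset intervalIntegral

namespace Polynomial.Chebyshev

variable {R : Type*} [CommRing R]

theorem two_mul_X_mul_U (n : ℤ) : 2 * X * U R n = U R (n + 1) + U R (n - 1) := by
  rw [U_add_one]; ring

-- No `b ≤ a` is needed: `U (-n - 2) = -U n` makes the terms of negative index cancel.
theorem U_mul_U_natCast (a : ℤ) (b : ℕ) :
    U R a * U R b = ∑ p ∈ range (b + 1), U R (a + b - 2 * p) := by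
  induction b using Nat.twoStepInduction with
  | zero => simp
  | one =>
    rw [sum_range_succ, sum_range_one, Nat.cast_one, U_one, mul_comm, two_mul_X_mul_U]
    congr 1 <;> ring_nf
  | more b ih₀ ih₁ =>
    have step (p : ℕ) : 2 * X * U R (a + (b + 1 : ℕ) - 2 * p) =
        U R (a + (b + 2 : ℕ) - 2 * p) + U R (a + b - 2 * p) := by
      rw [two_mul_X_mul_U]; congr 2 <;> push_cast <;> ring
    have last : a + (b + 2 : ℕ) - 2 * (b + 2 : ℕ) = a + b - 2 * (b + 1 : ℕ) := by push_cast; ring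
    calc U R a * U R (b + 2 : ℕ)
        = 2 * X * (U R a * U R (b + 1 : ℕ)) - U R a * U R b := by
          rw [show ((b + 2 : ℕ) : ℤ) = b + 2 by push_cast; ring, U_add_two]; push_cast; ring
      _ = ∑ p ∈ range (b + 2), (U R (a + (b + 2 : ℕ) - 2 * p) + U R (a + b - 2 * p))
            - ∑ p ∈ range (b + 1), U R (a + b - 2 * p) := by
          rw [ih₀, ih₁, mul_sum, sum_congr rfl fun p _ => step p]
      _ = ∑ p ∈ range (b + 2 + 1), U R (a + (b + 2 : ℕ) - 2 * p) := by
          rw [sum_add_distrib, sum_range_succ (fun p : ℕ => U R (a + b - 2 * p)) (b + 1),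
            sum_range_succ _ (b + 2), last]
          ring

theorem U_mul_U_nat (i j : ℕ) :
    U R i * U R j = ∑ p ∈ range (min i j + 1), U R (i + j - 2 * p) := by
  rcases le_total j i with h | h
  · rw [min_eq_right h, U_mul_U_natCast]
  · rw [min_eq_left h, mul_comm, U_mul_U_natCast, add_comm (j : ℤ)]

end Polynomial.Chebyshev

theorem chebU_eq_eval_U (n : ℕ) (y : ℝ) : chebU n y = (U ℝ n).eval y := by
  induction n using Nat.twoStepInduction with
  | zero => simp [chebU]
  | one => simp [chebU]
  | more n ih₀ ih₁ =>
    rw [chebU, ih₀, ih₁, show ((n + 2 : ℕ) : ℤ) = n + 2 by push_cast; ring, U_add_two]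
    simp

theorem integral_cos_int_mul (n : ℤ) :
    ∫ θ in (0:ℝ)..π, cos (n * θ) = if n = 0 then π else 0 := by
  split_ifs with hn
  · simp [hn]
  · rw [integral_comp_mul_left cos (Int.cast_ne_zero.mpr hn), integral_cos, sin_int_mul_pi]
    simp

theorem integral_sin_int_mul_mul_sin_int_mul (a b : ℤ) (hab : a + b ≠ 0) :
    ∫ θ in (0:ℝ)..π, sin (a * θ) * sin (b * θ) = if a = b then π / 2 else 0 := by
  have product_to_sum (θ : ℝ) : sin (a * θ) * sin (b * θ) =
      (cos ((a - b : ℤ) * θ) - cos ((a + b : ℤ) * θ)) / 2 := by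
    push_cast; rw [sub_mul, add_mul, cos_sub, cos_add]; ring
  simp_rw [product_to_sum]
  rw [intervalIntegral.integral_div, intervalIntegral.integral_sub
    ((by fun_prop : Continuous _).intervalIntegrable _ _)
    ((by fun_prop : Continuous _).intervalIntegrable _ _), integral_cos_int_mul,
    integral_cos_int_mul, if_neg hab]
  simp only [sub_eq_zero]
  split_ifs <;> ring

theorem integral_mul_sqrt_one_sub_sq_eq_integral_cos {f : ℝ → ℝ} (hf : Continuous f) :
    ∫ y in (-1:ℝ)..1, f y * √(1 - y ^ 2) = ∫ θ in (0:ℝ)..π, f (cos θ) * sin θ ^ 2 := by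
  have sqrt_eq : ∀ θ ∈ Set.uIcc 0 π, √(1 - cos θ ^ 2) = sin θ := fun θ hθ => by
    rw [Set.uIcc_of_le pi_pos.le] at hθ
    rw [← sin_sq, sqrt_sq (sin_nonneg_of_nonneg_of_le_pi hθ.1 hθ.2)]
  have substitution := integral_comp_mul_deriv (a := 0) (b := π) (fun θ _ => hasDerivAt_cos θ)
    (by fun_prop) (show Continuous fun y => f y * √(1 - y ^ 2) by fun_prop)
  rw [cos_zero, cos_pi] at substitution
  rw [integral_symm, ← substitution, ← intervalIntegral.integral_neg]
  refine integral_congr fun θ hθ => ?_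
  simp only [Function.comp_apply, sqrt_eq θ hθ]
  ring

theorem integral_eval_U_mul_eval_U_mul_sqrt (r s : ℤ) (hrs : r + s ≠ -2) :
    ∫ y in (-1:ℝ)..1, (U ℝ r).eval y * (U ℝ s).eval y * √(1 - y ^ 2)
      = if r = s then π / 2 else 0 := by
  rw [integral_mul_sqrt_one_sub_sq_eq_integral_cos (by fun_prop)]
  have sin_form (θ : ℝ) : (U ℝ r).eval (cos θ) * (U ℝ s).eval (cos θ) * sin θ ^ 2 =
      sin ((r + 1 : ℤ) * θ) * sin ((s + 1 : ℤ) * θ) := by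
    push_cast; rw [← U_real_cos, ← U_real_cos]; ring
  simp_rw [sin_form]
  rw [integral_sin_int_mul_mul_sin_int_mul _ _ (by omega)]
  simp

theorem Ccoef_eq_card (i j k m : ℕ) :
    Ccoef i j k m = #{pq ∈ range (min i j + 1) ×ˢ range (min k m + 1) |
      (i + j - 2 * pq.1 : ℤ) = k + m - 2 * pq.2} := by
  have expand (y : ℝ) : chebU i y * chebU j y * chebU k y * chebU m y * √(1 - y ^ 2) =
      ∑ pq ∈ range (min i j + 1) ×ˢ range (min k m + 1),
        (U ℝ (i + j - 2 * pq.1)).eval y * (U ℝ (k + m - 2 * pq.2)).eval y * √(1 - y ^ 2) := by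
    have pair_up : chebU i y * chebU j y * chebU k y * chebU m y * √(1 - y ^ 2) =
        (U ℝ i * U ℝ j).eval y * (U ℝ k * U ℝ m).eval y * √(1 - y ^ 2) := by
      simp only [eval_mul, chebU_eq_eval_U]; ring
    rw [pair_up, U_mul_U_nat, U_mul_U_nat, eval_finsetSum, eval_finsetSum, sum_mul_sum, sum_mul,
      sum_product]
    simp only [sum_mul]
  have orthogonality : ∀ pq ∈ range (min i j + 1) ×ˢ range (min k m + 1),
      ∫ y in (-1:ℝ)..1,
        (U ℝ (i + j - 2 * pq.1)).eval y * (U ℝ (k + m - 2 * pq.2)).eval y * √(1 - y ^ 2)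
      = if (i + j - 2 * pq.1 : ℤ) = k + m - 2 * pq.2 then π / 2 else 0 := fun pq hpq => by
    simp only [mem_product, mem_range] at hpq
    exact integral_eval_U_mul_eval_U_mul_sqrt _ _ (by omega)
  rw [Ccoef, intervalIntegral.integral_congr fun y _ => expand y,
    intervalIntegral.integral_finsetSum fun _ _ =>
      (by fun_prop : Continuous _).intervalIntegrable _ _,
    sum_congr rfl orthogonality, sum_ite, sum_const_zero, add_zero, sum_const, nsmul_eq_mul]
  field_simp

theorem card_filter_fst_eq_snd_range_product (A B : ℕ) :
    #{pq ∈ range A ×ˢ range B | pq.1 = pq.2} = min A B := by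
  have diagonal_eq :
      {pq ∈ range A ×ˢ range B | pq.1 = pq.2} = (range (min A B)).image fun p => (p, p) := by
    ext ⟨p, q⟩
    simp only [mem_filter, mem_product, mem_range, mem_image, Prod.mk.injEq]
    constructor
    · rintro ⟨⟨hp, hq⟩, rfl⟩; exact ⟨p, by omega, rfl, rfl⟩
    · rintro ⟨r, hr, rfl, rfl⟩; omega
  rw [diagonal_eq, card_image_of_injective _ fun p q h => (Prod.mk.inj h).1, card_range]

theorem Ccoef_of_add_eq_add {i j k m : ℕ} (h : i + j = k + m) :
    Ccoef i j k m = (min (min i j) (min k m) : ℝ) + 1 := by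
  have diagonal : ∀ pq ∈ range (min i j + 1) ×ˢ range (min k m + 1),
      ((i + j - 2 * pq.1 : ℤ) = k + m - 2 * pq.2 ↔ pq.1 = pq.2) := fun pq hpq => by
    simp only [mem_product, mem_range] at hpq; omega
  rw [Ccoef_eq_card, filter_congr diagonal, card_filter_fst_eq_snd_range_product]
  norm_cast; omega

theorem Ccoef_comm_second_third (i j k m : ℕ) : Ccoef i j k m = Ccoef i k j m := by
  simp only [Ccoef, mul_right_comm _ (chebU j _)]

theorem Ccoef_comm_third_fourth (i j k m : ℕ) : Ccoef i j k m = Ccoef i j m k := by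
  simp only [Ccoef, mul_right_comm _ (chebU k _)]

/-- On resonant indices with two minus signs, the Fourier coefficient equals
`ω_{min{i,j,k,m}} = min{i,j,k,m} + 1`. -/
theorem Ccoef_eq_omega_min_of_two_plus_two_resonance (i j k m : ℕ)
    (h : (i + 1) + (j + 1) = (k + 1) + (m + 1) ∨
         (i + 1) + (k + 1) = (j + 1) + (m + 1) ∨
         (i + 1) + (m + 1) = (j + 1) + (k + 1)) :
    Ccoef i j k m = (min (min i j) (min k m) : ℝ) + 1 := by
  rcases h with h | h | h
  · exact Ccoef_of_add_eq_add (by omega)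
  · rw [Ccoef_comm_second_third, Ccoef_of_add_eq_add (by omega)]
    norm_cast; omega
  · rw [Ccoef_comm_third_fourth, Ccoef_comm_second_third, Ccoef_of_add_eq_add (by omega)]
    norm_cast; omega
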